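/- The automorphisms θ_v and the involution ω of R[c_1,c_2,...][v] satisfy ω ∘ θ_v = θ_{-v} ∘ ω. -/

import Mathlib

open MvPolynomial

/-- The ring `R[c_1,c_2,…][v]`: `some k` represents `c_{k+1}`, `none` represents `v`. -/
abbrev CVRing (R : Type*) [CommRing R] := MvPolynomial (Option ℕ) R

/-- The `R`-algebra endomorphism `θ_w`, fixing `v`, with
`θ_w(c_k) = Σ_{i=1}^k C(k-1,i-1) w^{k-i} c_i`. -/
noncomputable def theta (R : Type*) [CommRing R] (w : CVRing R) : CVRing R →ₐ[R] CVRing R :=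
  aeval (fun s => match s with
    | some m => ∑ j ∈ Finset.range (m + 1),
        (Nat.choose m j : CVRing R) * w ^ (m - j) * X (some j)
    | none => X none)

/-- The series `c(t) = 1 + c_1 t + c_2 t² + ⋯`. -/
noncomputable def cSeries (R : Type*) [CommRing R] : PowerSeries (CVRing R) :=
  PowerSeries.mk fun k => if k = 0 then 1 else X (some (k - 1))

/-- The `R[v]`-algebra involution `ω`, fixing `v` and sending `c(t)` to `1/c(-t)`. -/
noncomputable def omegaHom (R : Type*) [CommRing R] : CVRing R →ₐ[R] CVRing R :=
  aeval (fun s => match s with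
    | some k => PowerSeries.coeff (R := CVRing R) (k + 1)
        ((PowerSeries.rescale (-1) (cSeries R)).invOfUnit 1)
    | none => X none)

/-!
Write `Ω(t) = 1/c(-t)`, so that `ω(c_k)` is the coefficient of `t^k` in `Ω`, and put
`T = t/(1 - v t)`. The coefficient of `t^(m+1)` in `f(T)` is `Σ_j C(m,j) v^(m-j) [t^(j+1)] f`,
which is the shape of `θ_v(c_(m+1))`; hence `ω θ_v (c_(m+1))` is the coefficient of `t^(m+1)`
in `Ω(T)`. On the other side, `θ_{-v}` applied coefficientwise sends `c(-t)` to `c(-T)` (the signs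
`(-1)^(m+1) (-1)^(m-j) = (-1)^(j+1)` match), and since substituting `T` is a ring homomorphism it
sends the inverse `Ω` of `c(-t)` to `Ω(T)`.
-/

namespace PowerSeries
variable {S : Type*} [CommRing S]

theorem coeff_subst_eq_sum_range {b : S⟦X⟧} (hb : constantCoeff b = 0) (f : S⟦X⟧)
    (n : ℕ) :
    coeff n (f.subst b) = ∑ d ∈ Finset.range (n + 1), coeff d f * coeff n (b ^ d) := by
  rw [coeff_subst' (HasSubst.of_constantCoeff_zero' hb)]
  refine finsum_eq_sum_of_support_subset _ fun d hd => ?_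
  rw [Finset.coe_range, Set.mem_Iio, Nat.lt_succ_iff]
  by_contra! hnd
  apply hd
  dsimp only
  obtain ⟨c, rfl⟩ := X_dvd_iff.mpr hb
  rw [mul_pow, coeff_X_pow_mul', if_neg (by omega), smul_zero]

noncomputable def xDivOneSubMulX (v : S) : S⟦X⟧ := X * rescale v (mk 1)

theorem constantCoeff_xDivOneSubMulX (v : S) : constantCoeff (xDivOneSubMulX v) = 0 := by
  simp [xDivOneSubMulX]

theorem coeff_succ_xDivOneSubMulX_pow_succ (v : S) {m j : ℕ} (hj : j ≤ m) :
    coeff (m + 1) (xDivOneSubMulX v ^ (j + 1)) = m.choose j * v ^ (m - j) := by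
  rw [xDivOneSubMulX, mul_pow, coeff_X_pow_mul', if_pos (by omega), ← map_pow,
    mk_one_pow_eq_mk_choose_add, coeff_rescale, coeff_mk, show m + 1 - (j + 1) = m - j by omega,
    Nat.add_sub_cancel' hj, mul_comm]

theorem coeff_succ_subst_xDivOneSubMulX (v : S) (f : S⟦X⟧) (m : ℕ) :
    coeff (m + 1) (f.subst (xDivOneSubMulX v)) =
      ∑ j ∈ Finset.range (m + 1), m.choose j * v ^ (m - j) * coeff (j + 1) f := by
  rw [coeff_subst_eq_sum_range (constantCoeff_xDivOneSubMulX v), Finset.sum_range_succ',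
    pow_zero, coeff_one, if_neg m.succ_ne_zero, mul_zero, add_zero]
  refine Finset.sum_congr rfl fun j hj => ?_
  rw [coeff_succ_xDivOneSubMulX_pow_succ v (Nat.lt_succ_iff.mp (Finset.mem_range.mp hj)), mul_comm]

theorem coeff_zero_subst_xDivOneSubMulX (v : S) (f : S⟦X⟧) :
    coeff 0 (f.subst (xDivOneSubMulX v)) = coeff 0 f := by
  simp [coeff_subst_eq_sum_range (constantCoeff_xDivOneSubMulX v)]

end PowerSeries

section Omega
variable (R : Type*) [CommRing R]

noncomputable def negCSeries : PowerSeries (CVRing R) := PowerSeries.rescale (-1) (cSeries R)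

noncomputable def omegaSeries : PowerSeries (CVRing R) := (negCSeries R).invOfUnit 1

theorem negCSeries_mul_omegaSeries : negCSeries R * omegaSeries R = 1 :=
  PowerSeries.mul_invOfUnit _ _ <| by
    simp [negCSeries, cSeries, ← PowerSeries.coeff_zero_eq_constantCoeff_apply]

theorem coeff_succ_negCSeries (k : ℕ) :
    PowerSeries.coeff (k + 1) (negCSeries R) = (-1) ^ (k + 1) * X (some k) := by
  simp [negCSeries, cSeries]

variable {R}

@[simp] theorem theta_X_none (w : CVRing R) : theta R w (X none) = X none := by
  simp [theta]

theorem theta_X_some (w : CVRing R) (m : ℕ) :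
    theta R w (X (some m)) =
      ∑ j ∈ Finset.range (m + 1), (m.choose j : CVRing R) * w ^ (m - j) * X (some j) := by
  simp [theta]

@[simp] theorem omegaHom_X_none : omegaHom R (X none) = X none := by
  simp [omegaHom]

theorem omegaHom_X_some (k : ℕ) :
    omegaHom R (X (some k)) = PowerSeries.coeff (k + 1) (omegaSeries R) := by
  simp [omegaHom, omegaSeries, negCSeries]

theorem map_theta_neg_negCSeries (v : CVRing R) :
    PowerSeries.map (theta R (-v) : CVRing R →+* CVRing R) (negCSeries R) =
      (negCSeries R).subst (PowerSeries.xDivOneSubMulX v) := by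
  refine PowerSeries.ext fun n => ?_
  cases n with
  | zero => simp [PowerSeries.coeff_zero_subst_xDivOneSubMulX, negCSeries, cSeries]
  | succ m =>
    rw [PowerSeries.coeff_map, PowerSeries.coeff_succ_subst_xDivOneSubMulX, coeff_succ_negCSeries,
      RingHom.coe_coe, map_mul, theta_X_some, Finset.mul_sum]
    refine Finset.sum_congr rfl fun j hj => ?_
    have hjm := Nat.lt_succ_iff.mp (Finset.mem_range.mp hj)
    have hsign : (-1 : CVRing R) ^ (m + 1) * (-1) ^ (m - j) = (-1) ^ (j + 1) := by
      rw [← pow_add, show m + 1 + (m - j) = j + 1 + 2 * (m - j) by omega, pow_add, pow_mul,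
        neg_one_sq, one_pow, mul_one]
    rw [coeff_succ_negCSeries, map_pow, map_neg, map_one, neg_pow v]
    linear_combination ((m.choose j : CVRing R) * v ^ (m - j) * X (some j)) * hsign

theorem map_theta_neg_omegaSeries (v : CVRing R) :
    PowerSeries.map (theta R (-v) : CVRing R →+* CVRing R) (omegaSeries R) =
      (omegaSeries R).subst (PowerSeries.xDivOneSubMulX v) := by
  have hT :=
    PowerSeries.HasSubst.of_constantCoeff_zero' (PowerSeries.constantCoeff_xDivOneSubMulX v)
  refine left_inv_eq_right_inv (a := (negCSeries R).subst (PowerSeries.xDivOneSubMulX v)) ?_ ?_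
  · rw [← map_theta_neg_negCSeries, mul_comm, ← map_mul, negCSeries_mul_omegaSeries, map_one]
  · rw [← PowerSeries.coe_substAlgHom hT, ← map_mul, negCSeries_mul_omegaSeries, map_one]

end Omega

/-- `ω ∘ θ_v = θ_{-v} ∘ ω` on `R[c_1,c_2,…][v]`. -/
theorem omega_theta (R : Type*) [CommRing R] :
    ∀ f : CVRing R,
      omegaHom R (theta R (X none) f) = theta R (-(X none)) (omegaHom R f) := by
  suffices ((omegaHom R).comp (theta R (X none)) : CVRing R →ₐ[R] CVRing R) =
      (theta R (-X none)).comp (omegaHom R) from AlgHom.congr_fun this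
  refine algHom_ext fun s => ?_
  cases s with
  | none => simp
  | some m =>
    have h := congrArg (PowerSeries.coeff (m + 1)) (map_theta_neg_omegaSeries (X none : CVRing R))
    rw [PowerSeries.coeff_map, RingHom.coe_coe, PowerSeries.coeff_succ_subst_xDivOneSubMulX] at h
    simp [theta_X_some, omegaHom_X_some, h]
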